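/- Let T be an ordered tree with n edges and let V be a set of k nonroot vertices (1 ≤ k ≤ n). The labels of the vertices of V occur as an increasing subsequence of length k in π(T) if and only if the vertices of V all lie on a single path from the root to some leaf (equivalently, V forms a chain in the ancestor ordering). -/

import Mathlib

/-- Ordered (plane) trees: a root with a list of subtrees. -/
inductive OTree : Type where
  | node : List OTree → OTree

namespace OTree

/-- Number of edges of an ordered tree. -/
def edges : OTree → ℕ
  | node [] => 0
  | node (t :: ts) => edges t + 1 + edges (node ts)

/-- Multiset of levels (distances from the root) of the nonroot vertices. -/
def levels : OTree → Multiset ℕ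
  | node [] => 0
  | node (t :: ts) => ((1 : ℕ) ::ₘ (levels t).map (· + 1)) + levels (node ts)

/-- Sum of the levels of all vertices (the root contributes 0). -/
def levelsSum (t : OTree) : ℕ := t.levels.sum

/-- The permutation word of a tree, entries shifted up by `k`: nonroot
vertices are labeled `k+n, …, k+1` in preorder and read in postorder. -/
def wordFrom : OTree → ℕ → List ℕ
  | node [], _ => []
  | node (t :: ts), k =>
      wordFrom t (k + edges (node ts)) ++
        (k + edges (node (t :: ts))) :: wordFrom (node ts) k

/-- The permutation `π(T)` of an ordered tree, as a word on `1, …, n`. -/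
def word (t : OTree) : List ℕ := wordFrom t 0

/-- The lattice-path word of a tree via preorder traversal:
`true` = east step (down an edge), `false` = north step (up an edge). -/
def pathWord : OTree → List Bool
  | node [] => []
  | node (t :: ts) => true :: (pathWord t ++ false :: pathWord (node ts))

/-- The subtree rooted at the vertex reached by the child-index path `p`. -/
def subtreeAt? : OTree → List ℕ → Option OTree
  | t, [] => some t
  | node [], _ :: _ => none
  | node (t :: _), 0 :: p => subtreeAt? t p
  | node (_ :: ts), (i + 1) :: p => subtreeAt? (node ts) (i :: p)

/-- The list of child-index paths to the nonroot vertices, in preorder. -/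
def paths : OTree → List (List ℕ)
  | node [] => []
  | node (t :: ts) =>
      ([0] :: (paths t).map (0 :: ·)) ++
        (paths (node ts)).map (fun p => match p with
          | i :: q => (i + 1) :: q
          | [] => [])

/-- The preorder label of the nonroot vertex at path `p` (labels `n, …, 1`). -/
def labelOf (t : OTree) (p : List ℕ) : ℕ := t.edges - t.paths.idxOf p

end OTree

/-- Area under a lattice path word (`true` = east, `false` = north):
the sum over east steps of the number of north steps preceding them. -/
def pathArea : List Bool → ℕ
  | [] => 0
  | true :: w => pathArea w
  | false :: w => pathArea w + w.count true

/-- A word avoids the pattern 132. -/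
def Avoids132W (w : List ℕ) : Prop :=
  ¬ ∃ i j k : ℕ, i < j ∧ j < k ∧ k < w.length ∧
      w.getD i 0 < w.getD k 0 ∧ w.getD k 0 < w.getD j 0

/-- Number of increasing patterns of length `k` in a word: index sets on
which the word is strictly increasing. -/
def incCountW (w : List ℕ) (k : ℕ) : ℕ :=
  ((Finset.univ : Finset (Finset (Fin w.length))).filter
    (fun S => S.card = k ∧ ∀ i ∈ S, ∀ j ∈ S, i < j → w.get i < w.get j)).card

/-- A permutation of `Fin n` avoids the pattern 132. -/
def Avoids132P {n : ℕ} (π : Equiv.Perm (Fin n)) : Prop :=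
  ¬ ∃ i j k : Fin n, i < j ∧ j < k ∧ π i < π k ∧ π k < π j

/-- Number of increasing patterns of length `k` in a permutation of `Fin n`. -/
def incCountP {n : ℕ} (π : Equiv.Perm (Fin n)) (k : ℕ) : ℕ :=
  ((Finset.univ : Finset (Finset (Fin n))).filter
    (fun S => S.card = k ∧ ∀ i ∈ S, ∀ j ∈ S, i < j → π i < π j)).card

/-- A subdiagonal lattice path from `(0,0)` to `(n,n)`, as a sequence of
`2n` steps (`true` = east, `false` = north) with `n` east steps such that
every prefix has at least as many east steps as north steps. -/
def IsSubdiagPath (n : ℕ) (f : Fin (2 * n) → Bool) : Prop :=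
  (Finset.univ.filter fun i => f i = true).card = n ∧
    ∀ m : ℕ, (Finset.univ.filter fun i : Fin (2 * n) => i.1 < m ∧ f i = false).card ≤
      (Finset.univ.filter fun i : Fin (2 * n) => i.1 < m ∧ f i = true).card

/-- Area under a subdiagonal lattice path given as a step sequence. -/
def pathAreaF {n : ℕ} (f : Fin (2 * n) → Bool) : ℕ :=
  ∑ i ∈ Finset.univ.filter (fun i => f i = true),
    (Finset.univ.filter fun j : Fin (2 * n) => j < i ∧ f j = false).card

namespace OTree

theorem rec2 {P : OTree → Prop} (h0 : P (node []))
    (h1 : ∀ t ts, P t → P (node ts) → P (node (t :: ts))) : ∀ t, P t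
  | node [] => h0
  | node (t :: ts) => h1 t ts (rec2 h0 h1 t) (rec2 h0 h1 (node ts))
termination_by t => sizeOf t
decreasing_by all_goals (simp; try omega)

def sh : List ℕ → List ℕ
  | i :: q => (i + 1) :: q
  | [] => []

theorem paths_cons (t : OTree) (ts : List OTree) :
    paths (node (t :: ts)) =
      [0] :: ((paths t).map (0 :: ·) ++ (paths (node ts)).map sh) := by
  rw [paths, List.cons_append]
  congr 2

theorem ne_nil_of_mem_paths : ∀ t : OTree, ∀ p ∈ paths t, p ≠ [] := by
  refine rec2 ?_ ?_
  · simp [paths]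
  · intro t ts ih1 ih2 p hp
    rw [paths_cons] at hp
    rcases List.mem_cons.1 hp with rfl | hp
    · simp
    rcases List.mem_append.1 hp with hp | hp
    · obtain ⟨q, _, rfl⟩ := List.mem_map.1 hp; simp
    · obtain ⟨q, hq, rfl⟩ := List.mem_map.1 hp
      have := ih2 q hq
      cases q with
      | nil => exact absurd rfl this
      | cons i r => simp [sh]

theorem length_paths : ∀ t : OTree, (paths t).length = edges t := by
  refine rec2 ?_ ?_
  · simp [paths, edges]
  · intro t ts ih1 ih2
    rw [paths_cons, edges]
    simp [ih1, ih2]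
    try omega

theorem length_wordFrom : ∀ t : OTree, ∀ k, (wordFrom t k).length = edges t := by
  refine rec2 ?_ ?_
  · simp [wordFrom, edges]
  · intro t ts ih1 ih2 k
    rw [wordFrom, edges]
    simp [ih1, ih2]
    try omega

theorem mem_wordFrom : ∀ t : OTree, ∀ k x, x ∈ wordFrom t k ↔ k < x ∧ x ≤ k + edges t := by
  refine rec2 ?_ ?_
  · intro k x; simp [wordFrom, edges]; try omega
  · intro t ts ih1 ih2 k x
    rw [wordFrom, edges]
    simp [ih1, ih2, edges]
    omega


theorem nodup_wordFrom : ∀ t : OTree, ∀ k, (wordFrom t k).Nodup := by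
  refine rec2 ?_ ?_
  · intro k; simp [wordFrom]
  · intro t ts ih1 ih2 k
    rw [wordFrom]
    rw [List.nodup_append]
    refine ⟨ih1 _, ?_, ?_⟩
    · rw [List.nodup_cons]
      refine ⟨?_, ih2 k⟩
      rw [mem_wordFrom]; rw [edges]; omega
    · intro a ha b hb hab
      subst hab
      rw [mem_wordFrom] at ha
      rcases List.mem_cons.1 hb with rfl | hb
      · rw [edges] at *; omega
      · rw [mem_wordFrom] at hb; omega

section Kit
variable {α : Type*} [BEq α] [LawfulBEq α]

theorem kIdx_cons_self (a : α) (l : List α) : (a :: l).idxOf a = 0 := by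
  simp [List.idxOf_cons]

theorem kIdx_cons_ne {a b : α} (l : List α) (h : b ≠ a) :
    (b :: l).idxOf a = l.idxOf a + 1 := by
  have : (b == a) = false := by simpa using h
  simp [List.idxOf_cons, this]

theorem kIdx_append_left {a : α} {l₁ : List α} (h : a ∈ l₁) (l₂ : List α) :
    (l₁ ++ l₂).idxOf a = l₁.idxOf a := by
  induction l₁ with
  | nil => simp at h
  | cons x xs ih =>
    by_cases hx : x = a
    · subst hx; simp [kIdx_cons_self]
    · rcases List.mem_cons.1 h with rfl | h'
      · exact absurd rfl hx
      · rw [List.cons_append, kIdx_cons_ne _ hx, kIdx_cons_ne _ hx, ih h']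

theorem kIdx_append_right {a : α} {l₁ : List α} (h : a ∉ l₁) (l₂ : List α) :
    (l₁ ++ l₂).idxOf a = l₁.length + l₂.idxOf a := by
  induction l₁ with
  | nil => simp
  | cons x xs ih =>
    have hx : x ≠ a := fun hc => h (hc ▸ List.mem_cons_self)
    rw [List.cons_append, kIdx_cons_ne _ hx, ih (fun hc => h (List.mem_cons_of_mem _ hc))]
    simp; omega

theorem kIdx_lt_length {a : α} {l : List α} (h : a ∈ l) : l.idxOf a < l.length := by
  induction l with
  | nil => simp at h
  | cons x xs ih =>
    by_cases hx : x = a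
    · subst hx; simp [kIdx_cons_self]
    · rcases List.mem_cons.1 h with rfl | h'
      · exact absurd rfl hx
      · rw [kIdx_cons_ne _ hx]; simpa using Nat.succ_lt_succ (ih h')

theorem kIdx_getElem {a : α} {l : List α} (h : a ∈ l) :
    l[l.idxOf a]'(kIdx_lt_length h) = a := by
  induction l with
  | nil => simp at h
  | cons x xs ih =>
    by_cases hx : x = a
    · subst hx; simp [kIdx_cons_self]
    · rcases List.mem_cons.1 h with rfl | h'
      · exact absurd rfl hx
      · have := kIdx_cons_ne (a := a) xs hx
        simp only [this]
        simpa using ih h'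

theorem kIdx_of_getElem {l : List α} (hn : l.Nodup) (i : ℕ) (hi : i < l.length) :
    l.idxOf (l[i]'hi) = i := by
  induction l generalizing i with
  | nil => simp at hi
  | cons x xs ih =>
    rcases List.nodup_cons.1 hn with ⟨hx, hn'⟩
    cases i with
    | zero => simpa using kIdx_cons_self x xs
    | succ j =>
      have hj : j < xs.length := by simpa using hi
      have hmem : xs[j]'hj ∈ xs := List.getElem_mem _
      have hne : x ≠ xs[j]'hj := fun hc => hx (hc ▸ hmem)
      have : (x :: xs)[j+1]'hi = xs[j]'hj := by simp
      rw [this, kIdx_cons_ne _ hne, ih hn' j hj]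

end Kit

theorem indexOf_map_inj {α β : Type*} [BEq α] [LawfulBEq α] [BEq β] [LawfulBEq β]
    {f : α → β} (hf : Function.Injective f) (l : List α) (a : α) :
    (l.map f).idxOf (f a) = l.idxOf a := by
  induction l with
  | nil => simp
  | cons x xs ih =>
    by_cases h : x = a
    · subst h; simp [kIdx_cons_self]
    · rw [List.map_cons, kIdx_cons_ne _ (fun hc => h (hf hc)), kIdx_cons_ne _ h, ih]

theorem sh_mem_iff {l : List (List ℕ)} (hl : ∀ x ∈ l, x ≠ []) (i : ℕ) (q : List ℕ) :
    (i + 1) :: q ∈ l.map sh ↔ i :: q ∈ l := by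
  constructor
  · intro h
    obtain ⟨x, hx, hxe⟩ := List.mem_map.1 h
    cases x with
    | nil => exact absurd rfl (hl _ hx)
    | cons j r =>
      simp only [sh] at hxe
      obtain ⟨h1, h2⟩ := List.cons.inj hxe
      subst h2
      have : j = i := by omega
      subst this; exact hx
  · intro h
    exact List.mem_map.2 ⟨i :: q, h, rfl⟩

theorem zero_not_mem_sh {l : List (List ℕ)} (hl : ∀ x ∈ l, x ≠ []) (q : List ℕ) :
    (0 :: q) ∉ l.map sh := by
  intro h
  obtain ⟨x, hx, hxe⟩ := List.mem_map.1 h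
  cases x with
  | nil => exact absurd rfl (hl _ hx)
  | cons j r => simp [sh] at hxe

theorem indexOf_map_sh {l : List (List ℕ)} (hl : ∀ x ∈ l, x ≠ []) (i : ℕ) (q : List ℕ) :
    (l.map sh).idxOf ((i + 1) :: q) = l.idxOf (i :: q) := by
  induction l with
  | nil => simp
  | cons x xs ih =>
    have hx := hl x (by simp)
    have hih := ih (fun y hy => hl y (by simp [hy]))
    cases x with
    | nil => exact absurd rfl hx
    | cons j r =>
      by_cases h : (j : ℕ) = i ∧ r = q
      · obtain ⟨rfl, rfl⟩ := h
        simp [sh, kIdx_cons_self]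
      · have h1' : ((j + 1) :: r : List ℕ) ≠ (i + 1) :: q := by
          simp only [ne_eq, List.cons.injEq, not_and]
          intro h3 h4; exact h ⟨by omega, h4⟩
        have h2 : (j :: r : List ℕ) ≠ i :: q := by
          simp only [ne_eq, List.cons.injEq, not_and]
          intro h3 h4; exact h ⟨h3, h4⟩
        rw [List.map_cons, show sh (j :: r) = (j + 1) :: r from rfl,
          kIdx_cons_ne _ h1', kIdx_cons_ne _ h2, hih]

theorem mem_paths_cases {t : OTree} {ts : List OTree} {p : List ℕ}
    (hp : p ∈ paths (node (t :: ts))) :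
    p = [0] ∨ (∃ p', p' ∈ paths t ∧ p = 0 :: p') ∨
      (∃ i q, i :: q ∈ paths (node ts) ∧ p = (i + 1) :: q) := by
  rw [paths_cons] at hp
  rcases List.mem_cons.1 hp with rfl | hp
  · exact Or.inl rfl
  rcases List.mem_append.1 hp with hp | hp
  · obtain ⟨q, hq, rfl⟩ := List.mem_map.1 hp
    exact Or.inr (Or.inl ⟨q, hq, rfl⟩)
  · obtain ⟨q, hq, rfl⟩ := List.mem_map.1 hp
    cases q with
    | nil => exact absurd rfl (ne_nil_of_mem_paths _ _ hq)
    | cons i r => exact Or.inr (Or.inr ⟨i, r, hq, rfl⟩)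

theorem cons0_mem_paths {t : OTree} {ts : List OTree} {p : List ℕ} (hp : p ∈ paths t) :
    0 :: p ∈ paths (node (t :: ts)) := by
  rw [paths_cons]
  exact List.mem_cons_of_mem _ (List.mem_append_left _ (List.mem_map.2 ⟨p, hp, rfl⟩))

theorem shift_mem_paths {t : OTree} {ts : List OTree} {i : ℕ} {q : List ℕ}
    (hq : i :: q ∈ paths (node ts)) : (i + 1) :: q ∈ paths (node (t :: ts)) := by
  rw [paths_cons]
  exact List.mem_cons_of_mem _ (List.mem_append_right _
    ((sh_mem_iff (ne_nil_of_mem_paths _) i q).2 hq))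

theorem root_mem_paths {t : OTree} {ts : List OTree} : [0] ∈ paths (node (t :: ts)) := by
  rw [paths_cons]; exact List.mem_cons_self

theorem mem_paths_iff : ∀ t : OTree, ∀ p, p ∈ paths t ↔ p ≠ [] ∧ (subtreeAt? t p).isSome := by
  refine rec2 ?_ ?_
  · intro p
    constructor
    · intro h; simp [paths] at h
    · rintro ⟨h1, h2⟩
      cases p with
      | nil => exact absurd rfl h1
      | cons i q => simp [subtreeAt?] at h2
  · intro t ts ih1 ih2 p
    constructor
    · intro hp
      refine ⟨ne_nil_of_mem_paths _ _ hp, ?_⟩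
      rcases mem_paths_cases hp with rfl | ⟨p', hp', rfl⟩ | ⟨i, q, hq, rfl⟩
      · simp [subtreeAt?]
      · simp only [subtreeAt?]
        exact ((ih1 p').1 hp').2
      · simp only [subtreeAt?]
        exact ((ih2 (i :: q)).1 hq).2
    · rintro ⟨h1, h2⟩
      cases p with
      | nil => exact absurd rfl h1
      | cons i q =>
        cases i with
        | zero =>
          simp only [subtreeAt?] at h2
          cases q with
          | nil => exact root_mem_paths
          | cons j r =>
            exact cons0_mem_paths ((ih1 (j :: r)).2 ⟨by simp, h2⟩)
        | succ i =>
          simp only [subtreeAt?] at h2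
          exact shift_mem_paths ((ih2 (i :: q)).2 ⟨by simp, h2⟩)

theorem indexOf_paths_root (t : OTree) (ts : List OTree) :
    (paths (node (t :: ts))).idxOf [0] = 0 := by
  rw [paths_cons]; exact kIdx_cons_self _ _

theorem indexOf_paths_cons0 {t : OTree} (ts : List OTree) {p : List ℕ} (hp : p ∈ paths t) :
    (paths (node (t :: ts))).idxOf (0 :: p) = (paths t).idxOf p + 1 := by
  have hne : ([0] : List ℕ) ≠ 0 :: p := by
    have := ne_nil_of_mem_paths _ _ hp
    cases p with
    | nil => exact absurd rfl this
    | cons a b => simp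
  rw [paths_cons, kIdx_cons_ne _ hne,
    kIdx_append_left (List.mem_map.2 ⟨p, hp, rfl⟩),
    indexOf_map_inj (fun a b h => (List.cons.inj h).2)]

theorem indexOf_paths_shift {t : OTree} {ts : List OTree} {i : ℕ} {q : List ℕ}
    (hq : i :: q ∈ paths (node ts)) :
    (paths (node (t :: ts))).idxOf ((i + 1) :: q) = edges t + 1 + (paths (node ts)).idxOf (i :: q) := by
  have hne : ([0] : List ℕ) ≠ (i+1) :: q := by simp
  have hnm : ((i+1) :: q) ∉ (paths t).map (0 :: ·) := by
    intro h
    obtain ⟨x, _, hxe⟩ := List.mem_map.1 h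
    exact absurd (List.cons.inj hxe).1 (by omega)
  rw [paths_cons, kIdx_cons_ne _ hne, kIdx_append_right hnm,
    indexOf_map_sh (ne_nil_of_mem_paths _) i q, List.length_map, length_paths]
  omega

/-- Shifted label of the vertex at path `p`. -/
def lab (t : OTree) (k : ℕ) (p : List ℕ) : ℕ := k + (t.edges - (paths t).idxOf p)

theorem indexOf_paths_lt {t : OTree} {p : List ℕ} (hp : p ∈ paths t) :
    (paths t).idxOf p < edges t := by
  have := kIdx_lt_length hp
  rwa [length_paths] at this

theorem lab_mem {t : OTree} (k : ℕ) {p : List ℕ} (hp : p ∈ paths t) :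
    lab t k p ∈ wordFrom t k := by
  have := indexOf_paths_lt hp
  rw [mem_wordFrom, lab]
  omega

theorem lab_root (u : OTree) (ts : List OTree) (k : ℕ) :
    lab (node (u :: ts)) k [0] = k + edges (node (u :: ts)) := by
  rw [lab, indexOf_paths_root]
  omega

theorem lab_cons0 {u : OTree} (ts : List OTree) (k : ℕ) {p : List ℕ} (hp : p ∈ paths u) :
    lab (node (u :: ts)) k (0 :: p) = lab u (k + edges (node ts)) p := by
  have := indexOf_paths_lt hp
  rw [lab, lab, indexOf_paths_cons0 _ hp, edges]
  omega

theorem lab_shift {u : OTree} {ts : List OTree} (k : ℕ) {i : ℕ} {q : List ℕ}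
    (hq : i :: q ∈ paths (node ts)) :
    lab (node (u :: ts)) k ((i + 1) :: q) = lab (node ts) k (i :: q) := by
  have := indexOf_paths_lt hq
  rw [lab, lab, indexOf_paths_shift hq, edges]
  omega

theorem widx_left {u : OTree} {ts : List OTree} {k x : ℕ}
    (hx : x ∈ wordFrom u (k + edges (node ts))) :
    (wordFrom (node (u :: ts)) k).idxOf x =
      (wordFrom u (k + edges (node ts))).idxOf x := by
  rw [wordFrom]
  exact kIdx_append_left hx _

theorem widx_root (u : OTree) (ts : List OTree) (k : ℕ) :
    (wordFrom (node (u :: ts)) k).idxOf (k + edges (node (u :: ts))) = edges u := by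
  have h1 : (k + edges (node (u :: ts))) ∉ wordFrom u (k + edges (node ts)) := by
    rw [mem_wordFrom, edges]
    omega
  rw [wordFrom, kIdx_append_right h1, kIdx_cons_self, length_wordFrom]
  omega

theorem widx_right {u : OTree} {ts : List OTree} {k x : ℕ}
    (hx : x ≤ k + edges (node ts)) :
    (wordFrom (node (u :: ts)) k).idxOf x =
      edges u + 1 + (wordFrom (node ts) k).idxOf x := by
  have h1 : x ∉ wordFrom u (k + edges (node ts)) := by
    rw [mem_wordFrom]
    omega
  have h2 : k + edges (node (u :: ts)) ≠ x := by
    rw [edges]; omega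
  rw [wordFrom, kIdx_append_right h1, kIdx_cons_ne _ h2, length_wordFrom]
  omega

theorem widx_lt {t : OTree} (k : ℕ) {p : List ℕ} (hp : p ∈ paths t) :
    (wordFrom t k).idxOf (lab t k p) < edges t := by
  have := kIdx_lt_length (lab_mem k hp)
  rwa [length_wordFrom] at this

theorem lab_le_of_right {ts : List OTree} (k : ℕ) {i : ℕ} {q : List ℕ}
    (hq : i :: q ∈ paths (node ts)) : lab (node ts) k (i :: q) ≤ k + edges (node ts) := by
  rw [lab]; omega

theorem indexOf_lt_of_prefix :
    ∀ t : OTree, ∀ p ∈ paths t, ∀ q ∈ paths t, p <+: q → p ≠ q →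
      (paths t).idxOf p < (paths t).idxOf q := by
  refine rec2 ?_ ?_
  · intro p hp; simp [paths] at hp
  · intro u ts ih1 ih2 p hp q hq hpre hne
    rcases mem_paths_cases hp with rfl | ⟨p', hp', rfl⟩ | ⟨i, p'', hp'', rfl⟩ <;>
      rcases mem_paths_cases hq with rfl | ⟨q', hq', rfl⟩ | ⟨j, q'', hq'', rfl⟩
    · exact absurd rfl hne
    · rw [indexOf_paths_root, indexOf_paths_cons0 _ hq']; omega
    · obtain ⟨h, -⟩ := List.cons_prefix_cons.1 hpre; omega
    · obtain ⟨-, h⟩ := List.cons_prefix_cons.1 hpre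
      rw [List.prefix_nil] at h
      exact absurd h (ne_nil_of_mem_paths _ _ hp')
    · obtain ⟨-, h⟩ := List.cons_prefix_cons.1 hpre
      have hne' : p' ≠ q' := fun hc => hne (by rw [hc])
      rw [indexOf_paths_cons0 _ hp', indexOf_paths_cons0 _ hq']
      have := ih1 p' hp' q' hq' h hne'
      omega
    · obtain ⟨h, -⟩ := List.cons_prefix_cons.1 hpre; omega
    · obtain ⟨h, -⟩ := List.cons_prefix_cons.1 hpre; omega
    · obtain ⟨h, -⟩ := List.cons_prefix_cons.1 hpre; omega
    · obtain ⟨h, htl⟩ := List.cons_prefix_cons.1 hpre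
      have hij : i = j := by omega
      subst hij
      have hne' : (i :: p'' : List ℕ) ≠ i :: q'' := fun hc => hne (by
        obtain ⟨-, h2⟩ := List.cons.inj hc; rw [h2])
      have := ih2 (i :: p'') hp'' (i :: q'') hq''
        (List.cons_prefix_cons.2 ⟨rfl, htl⟩) hne'
      rw [indexOf_paths_shift hp'', indexOf_paths_shift hq'']
      omega

theorem key :
    ∀ t : OTree, ∀ k, ∀ p ∈ paths t, ∀ q ∈ paths t,
      (paths t).idxOf p < (paths t).idxOf q →
      (p <+: q → (wordFrom t k).idxOf (lab t k q) < (wordFrom t k).idxOf (lab t k p)) ∧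
      (¬ p <+: q → (wordFrom t k).idxOf (lab t k p) < (wordFrom t k).idxOf (lab t k q)) := by
  refine rec2 ?_ ?_
  · intro k p hp; simp [paths] at hp
  · intro u ts ih1 ih2 k p hp q hq hlt
    rcases mem_paths_cases hp with rfl | ⟨p', hp', rfl⟩ | ⟨i, p'', hp'', rfl⟩ <;>
      rcases mem_paths_cases hq with rfl | ⟨q', hq', rfl⟩ | ⟨j, q'', hq'', rfl⟩
    · exact absurd hlt (lt_irrefl _)
    · constructor
      · intro _
        rw [lab_root, widx_root, lab_cons0 _ _ hq', widx_left (lab_mem _ hq')]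
        exact widx_lt _ hq'
      · intro hn
        exact absurd (List.cons_prefix_cons.2 ⟨rfl, List.nil_prefix⟩) hn
    · constructor
      · intro hpre
        obtain ⟨h, -⟩ := List.cons_prefix_cons.1 hpre; omega
      · intro _
        rw [lab_root, widx_root, lab_shift _ hq'', widx_right (lab_le_of_right _ hq'')]
        omega
    · rw [indexOf_paths_root, indexOf_paths_cons0 _ hp'] at hlt; omega
    · have hlt' : (paths u).idxOf p' < (paths u).idxOf q' := by
        rw [indexOf_paths_cons0 _ hp', indexOf_paths_cons0 _ hq'] at hlt; omega
      obtain ⟨h1, h2⟩ := ih1 (k + edges (node ts)) p' hp' q' hq' hlt'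
      rw [lab_cons0 _ _ hp', lab_cons0 _ _ hq', widx_left (lab_mem _ hp'),
        widx_left (lab_mem _ hq')]
      constructor
      · intro hpre
        exact h1 (List.cons_prefix_cons.1 hpre).2
      · intro hn
        exact h2 (fun hc => hn (List.cons_prefix_cons.2 ⟨rfl, hc⟩))
    · constructor
      · intro hpre
        obtain ⟨h, -⟩ := List.cons_prefix_cons.1 hpre; omega
      · intro _
        rw [lab_cons0 _ _ hp', widx_left (lab_mem _ hp'), lab_shift _ hq'',
          widx_right (lab_le_of_right _ hq'')]
        have := widx_lt (k + edges (node ts)) hp'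
        omega
    · rw [indexOf_paths_root, indexOf_paths_shift hp''] at hlt; omega
    · rw [indexOf_paths_cons0 _ hq', indexOf_paths_shift hp''] at hlt
      have := indexOf_paths_lt hq'
      omega
    · have hlt' : (paths (node ts)).idxOf (i :: p'') < (paths (node ts)).idxOf (j :: q'') := by
        rw [indexOf_paths_shift hp'', indexOf_paths_shift hq''] at hlt; omega
      obtain ⟨h1, h2⟩ := ih2 k (i :: p'') hp'' (j :: q'') hq'' hlt'
      rw [lab_shift _ hp'', lab_shift _ hq'', widx_right (lab_le_of_right _ hp''),
        widx_right (lab_le_of_right _ hq'')]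
      constructor
      · intro hpre
        obtain ⟨hij, htl⟩ := List.cons_prefix_cons.1 hpre
        have hij' : i = j := by omega
        subst hij'
        have := h1 (List.cons_prefix_cons.2 ⟨rfl, htl⟩)
        omega
      · intro hn
        have hn' : ¬ (i :: p'' : List ℕ) <+: j :: q'' := by
          intro hc
          obtain ⟨hij, htl⟩ := List.cons_prefix_cons.1 hc
          subst hij
          exact hn (List.cons_prefix_cons.2 ⟨rfl, htl⟩)
        have := h2 hn'
        omega

theorem labelOf_eq_lab (T : OTree) (p : List ℕ) : labelOf T p = lab T 0 p := by
  simp [labelOf, lab]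

theorem stmt10' (T : OTree) (V : Finset (List ℕ))
    (hV : ∀ p ∈ V, p ≠ [] ∧ (T.subtreeAt? p).isSome) :
    List.Pairwise (· < ·)
        (T.word.filter fun x => decide (x ∈ V.image T.labelOf)) ↔
      ∀ p ∈ V, ∀ q ∈ V, p <+: q ∨ q <+: p := by
  have hmem : ∀ p ∈ V, p ∈ T.paths := fun p hp =>
    (mem_paths_iff T p).2 ⟨(hV p hp).1, (hV p hp).2⟩
  rw [word, List.pairwise_filter, List.pairwise_iff_get]
  constructor
  · intro h p hp q hq
    by_contra hcon
    push_neg at hcon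
    obtain ⟨h1, h2⟩ := hcon
    have hpq : p ≠ q := fun hc => h1 (hc ▸ List.prefix_refl _)
    have hip := hmem p hp
    have hiq := hmem q hq
    have hne : (T.paths).idxOf p ≠ (T.paths).idxOf q := by
      intro hc
      apply hpq
      rw [← kIdx_getElem hip, ← kIdx_getElem hiq]
      congr 1
    have hi : (wordFrom T 0).idxOf (lab T 0 p) < (wordFrom T 0).length :=
      kIdx_lt_length (lab_mem 0 hip)
    have hj : (wordFrom T 0).idxOf (lab T 0 q) < (wordFrom T 0).length :=
      kIdx_lt_length (lab_mem 0 hiq)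
    have hgi : (wordFrom T 0).get ⟨_, hi⟩ = lab T 0 p := by
      rw [List.get_eq_getElem]; exact kIdx_getElem (lab_mem 0 hip)
    have hgj : (wordFrom T 0).get ⟨_, hj⟩ = lab T 0 q := by
      rw [List.get_eq_getElem]; exact kIdx_getElem (lab_mem 0 hiq)
    have hPp : lab T 0 p ∈ V.image T.labelOf :=
      Finset.mem_image.2 ⟨p, hp, (labelOf_eq_lab T p)⟩
    have hPq : lab T 0 q ∈ V.image T.labelOf :=
      Finset.mem_image.2 ⟨q, hq, (labelOf_eq_lab T q)⟩
    have hbp := indexOf_paths_lt hip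
    have hbq := indexOf_paths_lt hiq
    cases lt_or_gt_of_ne hne with
    | inl hlt =>
      have hw := (key T 0 p hip q hiq hlt).2 h1
      have := h ⟨_, hi⟩ ⟨_, hj⟩ hw
      rw [hgi, hgj] at this
      have := this (decide_eq_true hPp) (decide_eq_true hPq)
      rw [lab, lab] at this
      omega
    | inr hgt =>
      have hw := (key T 0 q hiq p hip hgt).2 h2
      have := h ⟨_, hj⟩ ⟨_, hi⟩ hw
      rw [hgi, hgj] at this
      have := this (decide_eq_true hPq) (decide_eq_true hPp)
      rw [lab, lab] at this
      omega
  · intro h i j hij hPi hPj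
    obtain ⟨p, hp, hep⟩ := Finset.mem_image.1 (of_decide_eq_true hPi)
    obtain ⟨q, hq, heq⟩ := Finset.mem_image.1 (of_decide_eq_true hPj)
    have hip := hmem p hp
    have hiq := hmem q hq
    rw [labelOf_eq_lab] at hep heq
    have e_i : (wordFrom T 0).idxOf (lab T 0 p) = (i : ℕ) := by
      rw [hep, List.get_eq_getElem]
      exact kIdx_of_getElem (nodup_wordFrom T 0) _ _
    have e_j : (wordFrom T 0).idxOf (lab T 0 q) = (j : ℕ) := by
      rw [heq, List.get_eq_getElem]
      exact kIdx_of_getElem (nodup_wordFrom T 0) _ _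
    have hpq : p ≠ q := by
      intro hc
      subst hc
      rw [e_i] at e_j
      exact absurd (Fin.ext e_j) (Fin.ne_of_lt hij)
    have hbp := indexOf_paths_lt hip
    have hbq := indexOf_paths_lt hiq
    rcases h p hp q hq with hpre | hpre
    · exfalso
      have hlt := indexOf_lt_of_prefix T p hip q hiq hpre hpq
      have hw := (key T 0 p hip q hiq hlt).1 hpre
      rw [e_i, e_j] at hw
      exact absurd hij (by omega)
    · have hlt := indexOf_lt_of_prefix T q hiq p hip hpre (Ne.symm hpq)
      rw [← hep, ← heq, lab, lab]
      have : (i : ℕ) < (j : ℕ) := hij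
      omega

end OTree

/-- Let `T` be an ordered tree with `n` edges and `V` a set of
`k` nonroot vertices (`1 ≤ k ≤ n`). The labels of the vertices of `V` occur
as an increasing subsequence of `π(T)` (i.e. the subsequence of `π(T)`
consisting of these labels is increasing) iff the vertices of `V` all lie on
one root-to-leaf path, i.e. form a chain in the ancestor (prefix) order. -/
theorem stmt10 (T : OTree) (V : Finset (List ℕ))
    (hV : ∀ p ∈ V, p ≠ [] ∧ (T.subtreeAt? p).isSome)
    (hcard₁ : 1 ≤ V.card) (hcard₂ : V.card ≤ T.edges) :
    List.Pairwise (· < ·)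
        (T.word.filter fun x => decide (x ∈ V.image T.labelOf)) ↔
      ∀ p ∈ V, ∀ q ∈ V, p <+: q ∨ q <+: p :=
  OTree.stmt10' T V hV
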